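/- Let N_t ≥ 1, K ≤ N_t, P_T > 0, σ² > 0. Let u_1, …, u_{N_t} be an orthonormal basis of ℂ^{N_t}, let h_1, …, h_K be nonzero vectors with u_k = h_k/‖h_k‖ for k ≤ K (so the h_k are pairwise orthogonal), and let λ_1, …, λ_{N_t} > 0 and Γ_1, …, Γ_K ≥ 0 satisfy Σ_{i=1}^{N_t} λ_i ≤ P_T and λ_k‖h_k‖² ≥ Γ_kσ² for all k ≤ K. Define R = Σ_{i=1}^{N_t} λ_i u_i u_iᴴ and W_k = λ_k u_k u_kᴴ for k ≤ K. Then: R is Hermitian positive definite with tr(R) = Σ_i λ_i and tr(R⁻¹) = Σ_{i=1}^{N_t} λ_i⁻¹; each W_k is positive semidefinite; R − Σ_{k=1}^K W_k is positive semidefinite; h_kᴴ(R − W_k)h_k = 0 for all k ≤ K; and h_kᴴ W_k h_k − Γ_k h_kᴴ(R − W_k)h_k ≥ Γ_kσ² for all k ≤ K. Consequently (R, Γ, (W_k)) is feasible for the multi-user joint design problem and its objective value is −Σ_{k=1}^K log(1+Γ_k) + ρ Σ_{i=1}^{N_t} λ_i⁻¹ for any ρ. -/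

import Mathlib

open Matrix ComplexOrder Finset

variable {n : ℕ}

lemma aux_vmv_mulVec (v w x : Fin n → ℂ) : Matrix.vecMulVec v w *ᵥ x = (w ⬝ᵥ x) • v := by
  ext i
  simp [Matrix.mulVec, Matrix.vecMulVec_apply, dotProduct, Finset.sum_mul, Finset.mul_sum,
    mul_comm, mul_left_comm, mul_assoc]

lemma aux_vmv_mul (v w v' w' : Fin n → ℂ) :
    Matrix.vecMulVec v w * Matrix.vecMulVec v' w' = (w ⬝ᵥ v') • Matrix.vecMulVec v w' := by
  ext p q
  simp [Matrix.mul_apply, Matrix.vecMulVec_apply, dotProduct, Finset.sum_mul, Finset.mul_sum,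
    mul_comm, mul_left_comm, mul_assoc]

lemma aux_trace_vmv (v w : Fin n → ℂ) : (Matrix.vecMulVec v w).trace = w ⬝ᵥ v := by
  simp [Matrix.trace, Matrix.diag, Matrix.vecMulVec_apply, dotProduct, mul_comm]

lemma aux_star_dp (v x : Fin n → ℂ) : star x ⬝ᵥ v = starRingEnd ℂ (star v ⬝ᵥ x) := by
  simp [dotProduct, map_sum, mul_comm]

lemma aux_psd (c : ℝ) (hc : 0 ≤ c) (v : Fin n → ℂ) :
    (((c : ℝ) : ℂ) • Matrix.vecMulVec v (star v)).PosSemidef := by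
  refine Matrix.PosSemidef.of_dotProduct_mulVec_nonneg ?_ ?_
  · ext i j
    simp [Matrix.conjTranspose_apply, Matrix.vecMulVec_apply, Complex.conj_ofReal, mul_comm]
  · intro x
    rw [smul_mulVec, aux_vmv_mulVec, dotProduct_smul, dotProduct_smul, aux_star_dp]
    set s := star x ⬝ᵥ v
    have h1 : (0:ℂ) ≤ starRingEnd ℂ s • s := by
      simpa [smul_eq_mul] using star_mul_self_nonneg s
    have h2 : (0:ℂ) ≤ ((c:ℝ):ℂ) := by
      rw [Complex.le_def]; simp [hc]
    exact smul_nonneg h2 h1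

lemma aux_sum_mulVec {ι : Type*} (s : Finset ι) (A : ι → Matrix (Fin n) (Fin n) ℂ)
    (x : Fin n → ℂ) : (∑ i ∈ s, A i) *ᵥ x = ∑ i ∈ s, A i *ᵥ x := by
  ext j
  simp [Matrix.mulVec, dotProduct, Matrix.sum_apply, Finset.sum_mul]
  rw [Finset.sum_comm]

lemma aux_dp_sum {ι : Type*} (s : Finset ι) (v : Fin n → ℂ) (w : ι → Fin n → ℂ) :
    v ⬝ᵥ (∑ i ∈ s, w i) = ∑ i ∈ s, v ⬝ᵥ w i := by
  simp [dotProduct, Finset.mul_sum, Finset.sum_apply]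
  rw [Finset.sum_comm]

/-- orthogonal multi-user case, feasibility correspondence: with an
orthonormal basis `u_i` extending the normalized orthogonal channels `u_k = h_k/‖h_k‖`,
`λ_i > 0`, `Σ λ_i ≤ P_T` and `λ_k ‖h_k‖² ≥ Γ_k σ²`, the point `R = Σ λ_i u_i u_iᴴ`,
`W_k = λ_k u_k u_kᴴ` is feasible for problem (11) and its objective value equals
`−Σ_k log(1+Γ_k) + ρ Σ_i λ_i⁻¹` for every `ρ`. Here `‖h_k‖² = h_kᴴ h_k`. -/
theorem orthogonal_multiuser_feasible (N_t K : ℕ) (hN : 1 ≤ N_t) (hKN : K ≤ N_t)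
    (P_T σ2 : ℝ) (hP : 0 < P_T) (hσ : 0 < σ2)
    (u : Fin N_t → Fin N_t → ℂ)
    (huon : ∀ i j, star (u i) ⬝ᵥ u j = if i = j then 1 else 0)
    (h : Fin K → Fin N_t → ℂ) (hne : ∀ k, h k ≠ 0)
    (hu : ∀ k : Fin K, u (Fin.castLE hKN k) =
      ((Real.sqrt ((star (h k) ⬝ᵥ h k).re) : ℝ) : ℂ)⁻¹ • h k)
    (lam : Fin N_t → ℝ) (hlam : ∀ i, 0 < lam i)
    (Γ : Fin K → ℝ) (hΓ : ∀ k, 0 ≤ Γ k)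
    (hsum : ∑ i, lam i ≤ P_T)
    (hcons : ∀ k : Fin K, lam (Fin.castLE hKN k) * (star (h k) ⬝ᵥ h k).re ≥ Γ k * σ2)
    (R : Matrix (Fin N_t) (Fin N_t) ℂ)
    (hR : R = ∑ i, ((lam i : ℝ) : ℂ) • Matrix.vecMulVec (u i) (star (u i)))
    (W : Fin K → Matrix (Fin N_t) (Fin N_t) ℂ)
    (hW : ∀ k, W k = ((lam (Fin.castLE hKN k) : ℝ) : ℂ) •
      Matrix.vecMulVec (u (Fin.castLE hKN k)) (star (u (Fin.castLE hKN k)))) :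
    R.PosDef ∧
    R.trace = ∑ i, ((lam i : ℝ) : ℂ) ∧
    (R⁻¹).trace = ∑ i, (((lam i)⁻¹ : ℝ) : ℂ) ∧
    (∀ k, (W k).PosSemidef) ∧
    (R - ∑ k, W k).PosSemidef ∧
    (∀ k, star (h k) ⬝ᵥ (R - W k) *ᵥ h k = 0) ∧
    (∀ k, (star (h k) ⬝ᵥ (W k) *ᵥ h k).re -
        Γ k * (star (h k) ⬝ᵥ (R - W k) *ᵥ h k).re ≥ Γ k * σ2) ∧
    (∀ ρ : ℝ, -(∑ k, Real.log (1 + Γ k)) + ρ * (R⁻¹).trace.re =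
        -(∑ k, Real.log (1 + Γ k)) + ρ * ∑ i, (lam i)⁻¹) := by
  classical
  -- basic facts about the channels
  have hdpos : ∀ k, 0 < star (h k) ⬝ᵥ h k := fun k =>
    Matrix.dotProduct_star_self_pos_iff.mpr (hne k)
  have hre : ∀ k, 0 < (star (h k) ⬝ᵥ h k).re := fun k => by
    have := (Complex.lt_def.mp (hdpos k)).1; simpa using this
  set c : Fin K → ℝ := fun k => Real.sqrt ((star (h k) ⬝ᵥ h k).re) with hc
  have hcpos : ∀ k, 0 < c k := fun k => Real.sqrt_pos.mpr (hre k)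
  have hh : ∀ k, h k = ((c k : ℝ) : ℂ) • u (Fin.castLE hKN k) := fun k => by
    rw [hu k, smul_smul, mul_inv_cancel₀, one_smul]
    exact_mod_cast (hcpos k).ne'
  have hd_eq : ∀ k, star (h k) ⬝ᵥ h k = (((star (h k) ⬝ᵥ h k).re : ℝ) : ℂ) := fun k => by
    have him := (Complex.lt_def.mp (hdpos k)).2
    apply Complex.ext <;> simp [← him]
  have hudp : ∀ (k : Fin K) (i : Fin N_t),
      star (u i) ⬝ᵥ h k = if i = Fin.castLE hKN k then ((c k : ℝ) : ℂ) else 0 := fun k i => by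
    rw [hh k, dotProduct_smul, huon]
    split <;> simp
  -- completeness of the orthonormal basis
  set U : Matrix (Fin N_t) (Fin N_t) ℂ := Matrix.of fun i j => u j i with hUdef
  have hUHU : Uᴴ * U = 1 := by
    ext i j
    simpa [Matrix.mul_apply, Matrix.conjTranspose_apply, dotProduct, Matrix.one_apply,
      hUdef] using huon i j
  have hUUH : U * Uᴴ = 1 := mul_eq_one_comm.mp hUHU
  have hcomp : ∑ i, Matrix.vecMulVec (u i) (star (u i)) = (1 : Matrix (Fin N_t) (Fin N_t) ℂ) := by
    rw [← hUUH]
    ext a b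
    simp [Matrix.sum_apply, Matrix.vecMulVec_apply, Matrix.mul_apply,
      Matrix.conjTranspose_apply, hUdef]
  -- mulVec computations
  have hRmv : ∀ x, R *ᵥ x = ∑ i, (((lam i : ℝ) : ℂ) * (star (u i) ⬝ᵥ x)) • u i := fun x => by
    rw [hR, aux_sum_mulVec]
    refine Finset.sum_congr rfl fun i _ => ?_
    rw [smul_mulVec, aux_vmv_mulVec, smul_smul]
  have hRh : ∀ k, R *ᵥ h k = ((lam (Fin.castLE hKN k) : ℝ) : ℂ) • h k := fun k => by
    rw [hRmv]
    rw [Finset.sum_eq_single (Fin.castLE hKN k)]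
    · rw [hudp, if_pos rfl, hh k, smul_smul]
    · intro i _ hik
      rw [hudp, if_neg hik, mul_zero, zero_smul]
    · simp
  have hWh : ∀ k, W k *ᵥ h k = ((lam (Fin.castLE hKN k) : ℝ) : ℂ) • h k := fun k => by
    rw [hW, smul_mulVec, aux_vmv_mulVec, hudp, if_pos rfl, hh k, smul_smul]
  have hRWh : ∀ k, (R - W k) *ᵥ h k = 0 := fun k => by
    rw [Matrix.sub_mulVec, hRh, hWh, sub_self]
  have item6 : ∀ k, star (h k) ⬝ᵥ (R - W k) *ᵥ h k = 0 := fun k => by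
    rw [hRWh, dotProduct_zero]
  -- Positive definiteness of R
  have hRpd : R.PosDef := by
    refine Matrix.PosDef.of_dotProduct_mulVec_pos ?_ ?_
    · rw [hR, Matrix.IsHermitian, Matrix.conjTranspose_sum]
      exact Finset.sum_congr rfl fun i _ => (aux_psd (lam i) (hlam i).le (u i)).1
    · intro x hx
      have key : star x ⬝ᵥ R *ᵥ x
          = ((∑ i, lam i * Complex.normSq (star (u i) ⬝ᵥ x) : ℝ) : ℂ) := by
        rw [hRmv, aux_dp_sum, Complex.ofReal_sum]
        refine Finset.sum_congr rfl fun i _ => ?_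
        have hs : star x ⬝ᵥ u i = starRingEnd ℂ (star (u i) ⬝ᵥ x) := aux_star_dp _ _
        rw [dotProduct_smul, smul_eq_mul, hs, mul_assoc, Complex.mul_conj]
        push_cast
        ring
      rw [key]
      rw [Complex.zero_lt_real]
      have hex : ∃ i, star (u i) ⬝ᵥ x ≠ 0 := by
        by_contra hall
        push_neg at hall
        apply hx
        have hx1 : x = (1 : Matrix (Fin N_t) (Fin N_t) ℂ) *ᵥ x := (Matrix.one_mulVec x).symm
        rw [← hcomp, aux_sum_mulVec] at hx1
        simpa [aux_vmv_mulVec, hall] using hx1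
      obtain ⟨i0, hi0⟩ := hex
      refine Finset.sum_pos' (fun i _ => mul_nonneg (hlam i).le (Complex.normSq_nonneg _)) ?_
      exact ⟨i0, Finset.mem_univ _, mul_pos (hlam i0) (Complex.normSq_pos.mpr hi0)⟩
  -- trace of R
  have htr : R.trace = ∑ i, ((lam i : ℝ) : ℂ) := by
    rw [hR, Matrix.trace_sum]
    refine Finset.sum_congr rfl fun i _ => ?_
    rw [Matrix.trace_smul, aux_trace_vmv, huon, if_pos rfl, smul_eq_mul, mul_one]
  -- inverse of R
  set S : Matrix (Fin N_t) (Fin N_t) ℂ :=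
    ∑ i, (((lam i)⁻¹ : ℝ) : ℂ) • Matrix.vecMulVec (u i) (star (u i)) with hSdef
  have hRS : R * S = 1 := by
    rw [hR, hSdef, Finset.sum_mul_sum, ← hcomp]
    refine Finset.sum_congr rfl fun i _ => ?_
    rw [Finset.sum_eq_single i]
    · rw [Matrix.smul_mul, Matrix.mul_smul, aux_vmv_mul, huon, if_pos rfl, one_smul,
        smul_smul, ← Complex.ofReal_mul, mul_inv_cancel₀ (hlam i).ne', Complex.ofReal_one,
        one_smul]
    · intro j _ hji
      rw [Matrix.smul_mul, Matrix.mul_smul, aux_vmv_mul, huon,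
        if_neg (fun hij => hji hij.symm), zero_smul, smul_zero, smul_zero]
    · simp
  have hRinv : R⁻¹ = S := Matrix.inv_eq_right_inv hRS
  have htrinv : (R⁻¹).trace = ∑ i, (((lam i)⁻¹ : ℝ) : ℂ) := by
    rw [hRinv, hSdef, Matrix.trace_sum]
    refine Finset.sum_congr rfl fun i _ => ?_
    rw [Matrix.trace_smul, aux_trace_vmv, huon, if_pos rfl, smul_eq_mul, mul_one]
  -- PosSemidef of W and of R - ∑ W
  have item4 : ∀ k, (W k).PosSemidef := fun k => by
    rw [hW]; exact aux_psd _ (hlam _).le _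
  have hpsd_sum : ∀ s : Finset (Fin N_t),
      (∑ i ∈ s, ((lam i : ℝ) : ℂ) • Matrix.vecMulVec (u i) (star (u i))).PosSemidef :=
    fun s => Finset.sum_induction _ _ (fun a b ha hb => ha.add hb) Matrix.PosSemidef.zero
      (fun i _ => aux_psd _ (hlam i).le _)
  have item5 : (R - ∑ k, W k).PosSemidef := by
    have himg : ∑ k, W k = ∑ i ∈ Finset.univ.image (Fin.castLE hKN),
        ((lam i : ℝ) : ℂ) • Matrix.vecMulVec (u i) (star (u i)) := by
      rw [Finset.sum_image (fun a _ b _ hab => Fin.castLE_injective hKN hab)]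
      exact Finset.sum_congr rfl fun k _ => hW k
    have hsplit : R - ∑ k, W k = ∑ i ∈ (Finset.univ.image (Fin.castLE hKN))ᶜ,
        ((lam i : ℝ) : ℂ) • Matrix.vecMulVec (u i) (star (u i)) := by
      rw [hR, himg, ← Finset.sum_compl_add_sum (Finset.univ.image (Fin.castLE hKN)),
        add_sub_cancel_right]
    rw [hsplit]
    exact hpsd_sum _
  -- item 7
  have item7 : ∀ k, (star (h k) ⬝ᵥ (W k) *ᵥ h k).re -
      Γ k * (star (h k) ⬝ᵥ (R - W k) *ᵥ h k).re ≥ Γ k * σ2 := fun k => by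
    rw [item6 k]
    have hdot : star (h k) ⬝ᵥ (W k) *ᵥ h k
        = ((lam (Fin.castLE hKN k) * (star (h k) ⬝ᵥ h k).re : ℝ) : ℂ) := by
      rw [hWh k, dotProduct_smul, smul_eq_mul]
      conv_lhs => rw [hd_eq k]
      push_cast; ring
    rw [hdot]
    simpa using hcons k
  -- item 8
  have item8 : ∀ ρ : ℝ, -(∑ k, Real.log (1 + Γ k)) + ρ * (R⁻¹).trace.re =
      -(∑ k, Real.log (1 + Γ k)) + ρ * ∑ i, (lam i)⁻¹ := fun ρ => by
    rw [htrinv, ← Complex.ofReal_sum, Complex.ofReal_re]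
  exact ⟨hRpd, htr, htrinv, item4, item5, item6, item7, item8⟩
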